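/- arXiv:1902.07898 — 5 statements merged into one kernel-verified Lean document; each statement's English description precedes it below -/
import Mathlib

section
/- Let α > 0 be real, let z, w ∈ ℂ with w² = z − α, and define f : ℝ → ℂ by f(x) = (1 + 2√α·x)^μ (complex power of the positive real base) where μ = i·w/(2√α) + 1/2. Then for every x ≥ 0 the function f is twice differentiable at x with f''(x) = −z·(1 + 2√α·x)^{−2}·f(x); moreover f(0) = 1, f'(0) = i·w + √α, and if z ≠ 0 and w ≠ −i√α then f'(0)/(z·f(0)) = i/(w + i√α). -/
/-!
Writing `g(x) = 1 + 2√α·x > 0`, we have `f = g^μ`, so `f'' = μ(μ-1)(2√α)² g^{μ-2}`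
and `f'(0) = 2√α·μ`. Since `2√α·μ = iw + √α` and `2√α·(μ-1) = iw - √α`, the coefficient is
`(iw + √α)(iw - √α) = -(w² + α) = -z`; the Weyl–Titchmarsh identity is then
`(iw + √α)(w + i√α) = i(w² + α) = iz`.
-/

open Complex Topology

section AffineCpow

variable (a b : ℝ) (c : ℂ) {x : ℝ}

theorem hasDerivAt_ofReal_affine_cpow (hx : 0 < a + b * x) :
    HasDerivAt (fun y : ℝ => ((a + b * y : ℝ) : ℂ) ^ c)
      (c * ((a + b * x : ℝ) : ℂ) ^ (c - 1) * b) x := by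
  have hlin : HasDerivAt (fun y : ℝ => ((a + b * y : ℝ) : ℂ)) b x := by
    simpa using (((hasDerivAt_id x).const_mul b).const_add a).ofReal_comp
  exact (hasStrictDerivAt_cpow_const (ofReal_mem_slitPlane.2 hx)).hasDerivAt.comp x hlin

theorem deriv_ofReal_affine_cpow_eventuallyEq (hx : 0 < a + b * x) :
    deriv (fun y : ℝ => ((a + b * y : ℝ) : ℂ) ^ c) =ᶠ[𝓝 x]
      fun y => c * ((a + b * y : ℝ) : ℂ) ^ (c - 1) * b := by
  have hopen : IsOpen {y : ℝ | 0 < a + b * y} := isOpen_lt continuous_const (by fun_prop)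
  filter_upwards [hopen.mem_nhds hx] with y hy
  exact (hasDerivAt_ofReal_affine_cpow a b c hy).deriv

theorem hasDerivAt_deriv_ofReal_affine_cpow (hx : 0 < a + b * x) :
    HasDerivAt (deriv fun y : ℝ => ((a + b * y : ℝ) : ℂ) ^ c)
      (c * (c - 1) * b ^ 2 * ((a + b * x : ℝ) : ℂ) ^ (c - 2)) x := by
  have h := ((hasDerivAt_ofReal_affine_cpow a b (c - 1) hx).const_mul c).mul_const (b : ℂ)
  refine (h.congr_of_eventuallyEq (deriv_ofReal_affine_cpow_eventuallyEq a b c hx)).congr_deriv ?_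
  rw [sub_sub, one_add_one_eq_two]
  ring

end AffineCpow

theorem cpow_sub_two_eq_zpow_mul_cpow {r : ℂ} (hr : r ≠ 0) (c : ℂ) :
    r ^ (c - 2) = r ^ (-2 : ℤ) * r ^ c := by
  rw [cpow_sub _ _ hr, cpow_two, zpow_neg, zpow_ofNat, div_eq_inv_mul]

/-- For `α > 0` and `w² = z − α`, the function `f(x) = (1+2√α·x)^{iw/(2√α)+1/2}`
solves `−f'' = z(1+2√α·x)^{−2} f` on `[0,∞)`, with `f(0) = 1`, `f'(0) = iw + √α`, and
`f'(0)/(z f(0)) = i/(w + i√α)` (the Weyl–Titchmarsh function of the model string `S_α`). -/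
theorem stmt_2 (α : ℝ) (hα : 0 < α) (z w : ℂ) (hw : w ^ 2 = z - (α : ℂ))
    (μ : ℂ) (hμ : μ = Complex.I * w / (2 * (Real.sqrt α : ℂ)) + 1 / 2)
    (f : ℝ → ℂ) (hf : ∀ x : ℝ, f x = ((1 + 2 * Real.sqrt α * x : ℝ) : ℂ) ^ μ) :
    (∀ x : ℝ, 0 ≤ x →
      DifferentiableAt ℝ f x ∧
      HasDerivAt (deriv f)
        (-z * ((1 + 2 * Real.sqrt α * x : ℝ) : ℂ) ^ (-2 : ℤ) * f x) x) ∧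
    f 0 = 1 ∧
    deriv f 0 = Complex.I * w + (Real.sqrt α : ℂ) ∧
    (z ≠ 0 → w ≠ -Complex.I * (Real.sqrt α : ℂ) →
      deriv f 0 / (z * f 0) = Complex.I / (w + Complex.I * (Real.sqrt α : ℂ))) := by
  set s := Real.sqrt α
  have hs : 0 < s := Real.sqrt_pos.2 hα
  have hs2 : (s : ℂ) ^ 2 = α := by exact_mod_cast Real.sq_sqrt hα.le
  have hpos : ∀ x : ℝ, 0 ≤ x → 0 < 1 + 2 * s * x := fun x hx => by positivity
  have hfeq : f = fun x => ((1 + 2 * s * x : ℝ) : ℂ) ^ μ := funext hf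
  have hμs : μ * (2 * s) = I * w + s := by
    rw [hμ]
    field_simp [ofReal_ne_zero.2 hs.ne']
  have hcoef : μ * (μ - 1) * (2 * s) ^ 2 = -z := by
    linear_combination (μ * (2 * s) + I * w - s) * hμs + w ^ 2 * I_sq - hw - hs2
  have hval0 : f 0 = 1 := by simp [hf]
  have hderiv0 : deriv f 0 = I * w + s := by
    rw [hfeq, (hasDerivAt_ofReal_affine_cpow 1 (2 * s) μ (by simp)).deriv]
    simpa using hμs
  refine ⟨fun x hx => ⟨?_, ?_⟩, hval0, hderiv0, fun hz hwI => ?_⟩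
  · exact hfeq ▸ (hasDerivAt_ofReal_affine_cpow _ _ μ (hpos x hx)).differentiableAt
  · rw [hfeq]
    refine (hasDerivAt_deriv_ofReal_affine_cpow 1 (2 * s) μ (hpos x hx)).congr_deriv ?_
    rw [cpow_sub_two_eq_zpow_mul_cpow (ofReal_ne_zero.2 (hpos x hx).ne'), ← hcoef]
    push_cast
    ring
  · have hden : w + I * s ≠ 0 := fun h => hwI (by linear_combination h)
    rw [hderiv0, hval0, mul_one, div_eq_div_iff (by simpa using hz) hden]
    linear_combination I * hw + I * hs2 + w * s * I_sq
end

section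
/- Define F(s) = 2(s³ + s)/(s² − 1)² + log(|s − 1|/|s + 1|) for real s ∈ (0,1) ∪ (1,∞). Then F(s) ≥ 16/(3s³) > 0 for every s > 1, and F(s) ≥ 16·s³/3 > 0 for every s ∈ (0,1). -/
/-!
Writing `G(s) = F(s) - 16 s³/3`, one computes `G'(s) = 16 s² ((1 - s²)⁻³ - 1) ≥ 0` on `(0, 1)` and
`G(0) = 0`, which gives the bound on `(0, 1)`. The bound for `s > 1` follows from the symmetry
`F(1/s) = F(s)`.
-/

open Set

noncomputable def liebThirringF (s : ℝ) : ℝ :=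
  2 * (s ^ 3 + s) / (s ^ 2 - 1) ^ 2 + Real.log (|s - 1| / |s + 1|)

theorem liebThirringF_inv (s : ℝ) : liebThirringF s⁻¹ = liebThirringF s := by
  rcases eq_or_ne s 0 with rfl | hs
  · simp
  have hrat : 2 * (s⁻¹ ^ 3 + s⁻¹) / (s⁻¹ ^ 2 - 1) ^ 2 = 2 * (s ^ 3 + s) / (s ^ 2 - 1) ^ 2 := by
    have hden : s⁻¹ ^ 2 - 1 = -(s ^ 2 - 1) / s ^ 2 := by
      field_simp
      ring
    rw [hden, neg_div, neg_sq, div_pow, div_div_eq_mul_div]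
    congr 1
    field_simp
    ring
  have hlog : |s⁻¹ - 1| / |s⁻¹ + 1| = |s - 1| / |s + 1| := by
    rw [← abs_div, ← abs_div, ← abs_neg]
    congr 1
    field_simp
    ring
  rw [liebThirringF, liebThirringF, hrat, hlog]

theorem hasDerivAt_liebThirringF {s : ℝ} (hs : s ^ 2 ≠ 1) :
    HasDerivAt liebThirringF (-16 * s ^ 2 / (s ^ 2 - 1) ^ 3) s := by
  have hsq : s ^ 2 - 1 ≠ 0 := sub_ne_zero.mpr hs
  have hm : s - 1 ≠ 0 := fun h => hs (by rw [sub_eq_zero.mp h, one_pow])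
  have hp : s + 1 ≠ 0 := fun h => hs (by rw [eq_neg_of_add_eq_zero_left h]; norm_num)
  have hnum : HasDerivAt (fun s : ℝ => 2 * (s ^ 3 + s)) (2 * (3 * s ^ 2 + 1)) s := by
    simpa using ((hasDerivAt_pow 3 s).add (hasDerivAt_id s)).const_mul (2 : ℝ)
  have hden : HasDerivAt (fun s : ℝ => (s ^ 2 - 1) ^ 2) (2 * (s ^ 2 - 1) * (2 * s)) s := by
    have hbase : HasDerivAt (fun s : ℝ => s ^ 2 - 1) (2 * s) s := by
      simpa using (hasDerivAt_pow 2 s).sub_const 1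
    simpa using hbase.fun_pow 2
  -- `log |x| = log x` in Mathlib, so the logarithm is differentiable on both sides of `±1`.
  have hlog : HasDerivAt (fun s : ℝ => Real.log (|s - 1| / |s + 1|))
      ((1 * (s + 1) - (s - 1) * 1) / (s + 1) ^ 2 / ((s - 1) / (s + 1))) s := by
    simp_rw [← abs_div, Real.log_abs]
    exact (((hasDerivAt_id s).sub_const 1).div ((hasDerivAt_id s).add_const 1) hp).log
      (div_ne_zero hm hp)
  have h : HasDerivAt liebThirringF _ s := (hnum.div hden (pow_ne_zero 2 hsq)).add hlog
  refine h.congr_deriv ?_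
  rw [show s ^ 2 - 1 = (s - 1) * (s + 1) by ring]
  field_simp
  ring

theorem monotoneOn_liebThirringF_sub_cube :
    MonotoneOn (fun s => liebThirringF s - 16 * s ^ 3 / 3) (Ico 0 1) := by
  have hderiv : ∀ s ∈ Ico (0 : ℝ) 1, HasDerivAt (fun s => liebThirringF s - 16 * s ^ 3 / 3)
      (-16 * s ^ 2 / (s ^ 2 - 1) ^ 3 - 16 * s ^ 2) s := fun s hs => by
    have hs2 : s ^ 2 ≠ 1 := by nlinarith [hs.1, hs.2]
    have hcube := ((hasDerivAt_pow 3 s).const_mul 16).div_const 3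
    exact ((hasDerivAt_liebThirringF hs2).sub hcube).congr_deriv (by norm_num; ring)
  refine monotoneOn_of_deriv_nonneg (convex_Ico 0 1)
    (fun s hs => (hderiv s hs).continuousAt.continuousWithinAt)
    (fun s hs => (hderiv s (interior_subset hs)).differentiableAt.differentiableWithinAt)
    (fun s hs => ?_)
  rw [interior_Ico] at hs
  rw [(hderiv s (Ioo_subset_Ico_self hs)).deriv]
  obtain ⟨hs0, hs1⟩ := hs
  have hu : 0 < 1 - s ^ 2 := by nlinarith
  have hu3 : (1 - s ^ 2) ^ 3 ≤ 1 := pow_le_one₀ hu.le (by nlinarith)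
  have heq : -16 * s ^ 2 / (s ^ 2 - 1) ^ 3 - 16 * s ^ 2
      = 16 * s ^ 2 * (1 - (1 - s ^ 2) ^ 3) / (1 - s ^ 2) ^ 3 := by
    rw [show (s ^ 2 - 1) ^ 3 = -(1 - s ^ 2) ^ 3 by ring]
    field_simp
  rw [heq]
  have : 0 ≤ 1 - (1 - s ^ 2) ^ 3 := by linarith
  positivity

theorem cube_le_liebThirringF {s : ℝ} (hs : s ∈ Ico (0 : ℝ) 1) :
    16 * s ^ 3 / 3 ≤ liebThirringF s := by
  have h := monotoneOn_liebThirringF_sub_cube (left_mem_Ico.mpr one_pos) hs hs.1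
  have h0 : liebThirringF 0 = 0 := by norm_num [liebThirringF]
  simpa [h0] using h

/-- Lower bounds for `F(s) = 2(s³+s)/(s²−1)² + log(|s−1|/|s+1|)`:
`F(s) ≥ 16/(3s³) > 0` for `s > 1` and `F(s) ≥ 16s³/3 > 0` for `s ∈ (0,1)`. -/
theorem stmt_8 (F : ℝ → ℝ)
    (hF : ∀ s ∈ Set.Ioo (0:ℝ) 1 ∪ Set.Ioi 1,
      F s = 2 * (s ^ 3 + s) / (s ^ 2 - 1) ^ 2 + Real.log (|s - 1| / |s + 1|)) :
    (∀ s : ℝ, 1 < s → 16 / (3 * s ^ 3) ≤ F s ∧ 0 < 16 / (3 * s ^ 3)) ∧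
    (∀ s ∈ Set.Ioo (0:ℝ) 1, 16 * s ^ 3 / 3 ≤ F s ∧ 0 < 16 * s ^ 3 / 3) := by
  refine ⟨fun s hs => ⟨?_, by positivity⟩, fun s hs => ⟨?_, by linarith [pow_pos hs.1 3]⟩⟩
  · have hinv : s⁻¹ ∈ Ico (0 : ℝ) 1 := ⟨by positivity, inv_lt_one_of_one_lt₀ hs⟩
    have h := cube_le_liebThirringF hinv
    rw [liebThirringF_inv, inv_pow] at h
    rw [hF s (Or.inr hs), ← liebThirringF]
    convert h using 1
    field_simp
  · rw [hF s (Or.inl hs), ← liebThirringF]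
    exact cube_le_liebThirringF (Ioo_subset_Ico_self hs)
end

section
/- Let g, h : [0,∞) → ℂ be continuously differentiable with h compactly supported, and define f(t) = g(log(1+t))·√(1+t) and h_S(t) = h(log(1+t))·√(1+t) for t ∈ [0,∞). Then ∫₀^∞ f'(t)·h_S'(t) dt = ∫₀^∞ g'(x)·h'(x) dx + (1/4)∫₀^∞ g(x)·h(x) dx − (1/2)·g(0)·h(0). -/
/-!
Put `x = log (1 + t)`. The chain rule gives `f'(t) = (g'(x) + g(x)/2) / √(1 + t)`, and likewise
for `h_S`, so `f' h_S' dt = (g' + g/2)(h' + h/2) dx` because `dx = dt / (1 + t)`. Expanding, the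
cross term is `(g h)'/2`, whose integral over `(0, ∞)` is `-g(0) h(0)/2` since `h` has compact
support.
-/

open Set MeasureTheory Filter Topology Real

theorem Complex.ofReal_sqrt_mul_self {x : ℝ} (hx : 0 ≤ x) : (√x : ℂ) * √x = x := by
  rw [← Complex.ofReal_mul, mul_self_sqrt hx]

theorem HasDerivWithinAt.comp_log_one_add_mul_sqrt {u u' : ℝ → ℂ}
    (hu : ∀ x ∈ Ici (0:ℝ), HasDerivWithinAt u (u' x) (Ici 0) x) {t : ℝ} (ht : 0 ≤ t) :
    HasDerivWithinAt (fun s => u (Real.log (1 + s)) * (√(1 + s) : ℂ))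
      ((u' (Real.log (1 + t)) + u (Real.log (1 + t)) / 2) / (√(1 + t) : ℂ)) (Ici 0) t := by
  have h1t : 0 < 1 + t := by linarith
  have hadd : HasDerivAt (fun s : ℝ => 1 + s) 1 t := (hasDerivAt_id t).const_add 1
  have hmaps : MapsTo (fun s => Real.log (1 + s)) (Ici 0) (Ici 0) := fun s hs =>
    log_nonneg (le_add_of_nonneg_right hs)
  have hlog := (hadd.log h1t.ne').hasDerivWithinAt (s := Ici 0)
  have hcomp := (hu _ (hmaps ht)).scomp t hlog hmaps
  have hsqrt := ((hadd.sqrt h1t.ne').ofReal_comp).hasDerivWithinAt (s := Ici 0)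
  refine (hcomp.mul hsqrt).congr_deriv ?_
  have hsq : (√(1 + t) : ℂ) * √(1 + t) = 1 + t := by
    exact_mod_cast Complex.ofReal_sqrt_mul_self h1t.le
  have hne : (√(1 + t) : ℂ) ≠ 0 := by exact_mod_cast (sqrt_pos.2 h1t).ne'
  simp only [Complex.real_smul, Function.comp_apply]
  push_cast
  rw [← hsq]
  field_simp

theorem derivWithin_Ici_of_eq_comp_log_one_add_mul_sqrt {u u' f : ℝ → ℂ}
    (hu : ∀ x ∈ Ici (0:ℝ), HasDerivWithinAt u (u' x) (Ici 0) x)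
    (hf : ∀ t : ℝ, 0 ≤ t → f t = u (Real.log (1 + t)) * (√(1 + t) : ℂ)) {t : ℝ} (ht : 0 ≤ t) :
    derivWithin f (Ici 0) t = (u' (Real.log (1 + t)) + u (Real.log (1 + t)) / 2) / (√(1 + t) : ℂ) :=
  ((HasDerivWithinAt.comp_log_one_add_mul_sqrt hu ht).congr (fun s hs => hf s hs)
    (hf t ht)).derivWithin (uniqueDiffOn_Ici 0 t ht)

section CompactSupport

variable {E : Type*} [NormedAddCommGroup E]

theorem HasCompactSupport.eventually_notMem_tsupport_atTop {h : ℝ → E}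
    (hs : HasCompactSupport h) : ∀ᶠ x in atTop, x ∉ tsupport h :=
  atTop_le_cocompact hs.isCompact.compl_mem_cocompact

theorem HasCompactSupport.eventuallyEq_zero_atTop {h : ℝ → E} (hs : HasCompactSupport h) :
    h =ᶠ[atTop] 0 :=
  hs.eventually_notMem_tsupport_atTop.mono fun _ hx => image_eq_zero_of_notMem_tsupport hx

theorem HasCompactSupport.eventuallyEq_zero_atTop_of_hasDerivWithinAt [NormedSpace ℝ E]
    {h h' : ℝ → E} {a : ℝ} (hs : HasCompactSupport h)
    (hh : ∀ x ∈ Ici a, HasDerivWithinAt h (h' x) (Ici a) x) : h' =ᶠ[atTop] 0 := by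
  filter_upwards [hs.eventually_notMem_tsupport_atTop, eventually_gt_atTop a] with x hx hax
  exact ((hh x hax.le).hasDerivAt (Ici_mem_nhds hax)).unique (HasDerivAt.of_notMem_tsupport hx)

theorem ContinuousOn.integrableOn_Ioi_of_eventuallyEq_zero {u : ℝ → E} {a : ℝ}
    (hu : ContinuousOn u (Ici a)) (hz : u =ᶠ[atTop] 0) : IntegrableOn u (Ioi a) := by
  obtain ⟨R, hR⟩ := eventually_atTop.1 (hz.and (eventually_ge_atTop a))
  have hcompact : IntegrableOn u (Ioc a R) :=
    (hu.mono Icc_subset_Ici_self).integrableOn_Icc.mono_set Ioc_subset_Icc_self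
  have htail : IntegrableOn u (Ioi R) :=
    integrableOn_zero.congr_fun (fun x hx => (hR x (le_of_lt hx)).1.symm) measurableSet_Ioi
  rw [← Ioc_union_Ioi_eq_Ioi (hR R le_rfl).2]
  exact hcompact.union htail

end CompactSupport

theorem integral_comp_log_one_add_Ioi {E : Type*} [NormedAddCommGroup E] [NormedSpace ℝ E]
    (u : ℝ → E) : ∫ t in Ioi 0, (1 + t)⁻¹ • u (log (1 + t)) = ∫ x in Ioi 0, u x := by
  have himage : (fun x => exp x - 1) '' Ioi 0 = Ioi 0 := by
    rw [← image_image (· - 1) exp, image_exp_Ioi, image_sub_const_Ioi, exp_zero, sub_self]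
  calc ∫ t in Ioi 0, (1 + t)⁻¹ • u (log (1 + t))
      = ∫ x in Ioi 0, |exp x| • ((1 + (exp x - 1))⁻¹ • u (log (1 + (exp x - 1)))) := by
        conv_lhs => rw [← himage]
        exact integral_image_eq_integral_abs_deriv_smul measurableSet_Ioi
          (fun x _ => ((hasDerivAt_exp x).sub_const 1).hasDerivWithinAt)
          (fun x _ y _ hxy => exp_injective (sub_left_injective hxy)) _
    _ = ∫ x in Ioi 0, u x := by
        refine setIntegral_congr_fun measurableSet_Ioi fun x _ => ?_
        simp [abs_of_pos (exp_pos x), smul_smul, (exp_pos x).ne']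

section IntegrationByParts

variable {g h g' h' : ℝ → ℂ} {a : ℝ}

theorem integral_Ioi_deriv_mul_add_mul_deriv_of_hasCompactSupport
    (hg : ∀ x ∈ Ici a, HasDerivWithinAt g (g' x) (Ici a) x)
    (hh : ∀ x ∈ Ici a, HasDerivWithinAt h (h' x) (Ici a) x)
    (hint : IntegrableOn (fun x => g' x * h x + g x * h' x) (Ioi a)) (hs : HasCompactSupport h) :
    ∫ x in Ioi a, (g' x * h x + g x * h' x) = -(g a * h a) := by
  have hlim : Tendsto (fun x => g x * h x) atTop (𝓝 0) :=
    tendsto_const_nhds.congr' <| hs.eventuallyEq_zero_atTop.mono fun x hx => by simp [hx]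
  rw [integral_Ioi_of_hasDerivAt_of_tendsto
    ((hg a self_mem_Ici).continuousWithinAt.mul (hh a self_mem_Ici).continuousWithinAt)
    (fun x hx => ((hg x hx.out.le).hasDerivAt (Ici_mem_nhds hx)).mul
      ((hh x hx.out.le).hasDerivAt (Ici_mem_nhds hx))) hint hlim, zero_sub, Pi.mul_apply]

theorem integral_Ioi_add_half_mul_add_half
    (hg : ∀ x ∈ Ici a, HasDerivWithinAt g (g' x) (Ici a) x) (hg'c : ContinuousOn g' (Ici a))
    (hh : ∀ x ∈ Ici a, HasDerivWithinAt h (h' x) (Ici a) x) (hh'c : ContinuousOn h' (Ici a))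
    (hs : HasCompactSupport h) :
    ∫ x in Ioi a, (g' x + g x / 2) * (h' x + h x / 2)
      = (∫ x in Ioi a, g' x * h' x) + 1 / 4 * (∫ x in Ioi a, g x * h x) - 1 / 2 * (g a * h a) := by
  have hgc : ContinuousOn g (Ici a) := fun x hx => (hg x hx).continuousWithinAt
  have hhc : ContinuousOn h (Ici a) := fun x hx => (hh x hx).continuousWithinAt
  have hz := hs.eventuallyEq_zero_atTop
  have hz' := hs.eventuallyEq_zero_atTop_of_hasDerivWithinAt hh
  have hint_deriv : IntegrableOn (fun x => g' x * h' x) (Ioi a) :=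
    (hg'c.mul hh'c).integrableOn_Ioi_of_eventuallyEq_zero (hz'.mono fun x hx => by simp [hx])
  have hint_prod : IntegrableOn (fun x => g x * h x) (Ioi a) :=
    (hgc.mul hhc).integrableOn_Ioi_of_eventuallyEq_zero (hz.mono fun x hx => by simp [hx])
  have hint_cross : IntegrableOn (fun x => g' x * h x + g x * h' x) (Ioi a) :=
    ((hg'c.mul hhc).add (hgc.mul hh'c)).integrableOn_Ioi_of_eventuallyEq_zero
      ((hz.and hz').mono fun x hx => by simp [hx.1, hx.2])
  have hint_rest : IntegrableOn (fun x => 1 / 2 * (g' x * h x + g x * h' x) + 1 / 4 * (g x * h x))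
      (Ioi a) := (hint_cross.const_mul _).add (hint_prod.const_mul _)
  have hparts := integral_Ioi_deriv_mul_add_mul_deriv_of_hasCompactSupport hg hh hint_cross hs
  calc ∫ x in Ioi a, (g' x + g x / 2) * (h' x + h x / 2)
      = ∫ x in Ioi a, (g' x * h' x + (1 / 2 * (g' x * h x + g x * h' x) + 1 / 4 * (g x * h x))) :=
        integral_congr_ae (ae_of_all _ fun x => by ring)
    _ = _ := by
        rw [integral_add hint_deriv hint_rest,
          integral_add (hint_cross.const_mul _) (hint_prod.const_mul _), integral_const_mul,
          integral_const_mul, hparts]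
        ring

end IntegrationByParts

/-- Substitution identity for the transformation `f(t) = g(log(1+t))√(1+t)`,
`h_S(t) = h(log(1+t))√(1+t)`:
`∫₀^∞ f' h_S' = ∫₀^∞ g' h' + (1/4)∫₀^∞ g h − (1/2) g(0) h(0)`. -/
theorem stmt_10 (g h g' h' : ℝ → ℂ)
    (hg : ∀ x ∈ Set.Ici (0:ℝ), HasDerivWithinAt g (g' x) (Set.Ici 0) x)
    (hg'c : ContinuousOn g' (Set.Ici 0))
    (hh : ∀ x ∈ Set.Ici (0:ℝ), HasDerivWithinAt h (h' x) (Set.Ici 0) x)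
    (hh'c : ContinuousOn h' (Set.Ici 0))
    (hsupp : HasCompactSupport h)
    (f hS : ℝ → ℂ)
    (hf : ∀ t : ℝ, 0 ≤ t → f t = g (Real.log (1 + t)) * (Real.sqrt (1 + t) : ℂ))
    (hhS : ∀ t : ℝ, 0 ≤ t → hS t = h (Real.log (1 + t)) * (Real.sqrt (1 + t) : ℂ)) :
    ∫ t in Set.Ioi (0:ℝ), derivWithin f (Set.Ici 0) t * derivWithin hS (Set.Ici 0) t
      = (∫ x in Set.Ioi (0:ℝ), g' x * h' x)
        + (1 / 4) * (∫ x in Set.Ioi (0:ℝ), g x * h x)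
        - (1 / 2) * (g 0 * h 0) := by
  have hderiv : ∀ t ∈ Ioi (0:ℝ), derivWithin f (Ici 0) t * derivWithin hS (Ici 0) t
      = (1 + t)⁻¹ • ((g' (Real.log (1 + t)) + g (Real.log (1 + t)) / 2)
          * (h' (Real.log (1 + t)) + h (Real.log (1 + t)) / 2)) := by
    intro t ht
    rw [derivWithin_Ici_of_eq_comp_log_one_add_mul_sqrt hg hf ht.out.le,
      derivWithin_Ici_of_eq_comp_log_one_add_mul_sqrt hh hhS ht.out.le, div_mul_div_comm,
      Complex.ofReal_sqrt_mul_self (by linarith [ht.out] : (0:ℝ) ≤ 1 + t),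
      Complex.real_smul, Complex.ofReal_inv, div_eq_inv_mul]
  rw [setIntegral_congr_fun measurableSet_Ioi hderiv,
    integral_comp_log_one_add_Ioi fun x => (g' x + g x / 2) * (h' x + h x / 2)]
  exact integral_Ioi_add_half_mul_add_half hg hg'c hh hh'c hsupp
end

section
/- Let g : [0,∞) → ℂ be continuously differentiable and bounded, and suppose ∫₀^∞ |g'(x) + (1/2)·g(x)|² dx < ∞. Then ∫₀^∞ |g(x)|² dx < ∞ and ∫₀^∞ |g'(x)|² dx < ∞. -/
/-!
Integrating the pointwise identity `‖g' + g/2‖² = ‖g'‖² + ‖g‖²/4 + (‖g‖²)'/2` over `[0, R]` and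
dropping the nonnegative terms `∫₀^R ‖g'‖²` and `‖g R‖²/2` gives
`∫₀^R ‖g‖² ≤ 4 ∫₀^∞ ‖g' + g/2‖² + 2 ‖g 0‖²` uniformly in `R`, so `g ∈ L²`;
then `g' = (g' + g/2) - g/2 ∈ L²` as well.
-/

open MeasureTheory Set Filter

lemma integrableOn_Ioi_of_nonneg_of_intervalIntegral_le {f : ℝ → ℝ} {a C : ℝ}
    (hf : ContinuousOn f (Ici a)) (hnn : ∀ x, 0 ≤ f x)
    (hle : ∀ R, a ≤ R → ∫ x in a..R, f x ≤ C) : IntegrableOn f (Ioi a) := by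
  refine integrableOn_Ioi_of_intervalIntegral_norm_bounded C a (b := id)
    (fun R => ((hf.mono Icc_subset_Ici_self).integrableOn_Icc).mono_set Ioc_subset_Icc_self)
    tendsto_id ?_
  filter_upwards [eventually_ge_atTop a] with R hR
  simpa only [id, Real.norm_of_nonneg (hnn _)] using hle R hR

section

variable {E : Type*} [NormedAddCommGroup E] [InnerProductSpace ℝ E]

lemma norm_add_half_smul_sq (a b : E) :
    ‖a + (2:ℝ)⁻¹ • b‖ ^ 2 = ‖a‖ ^ 2 + ‖b‖ ^ 2 / 4 + inner ℝ b a := by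
  rw [norm_add_sq_real, norm_smul, inner_smul_right, real_inner_comm]
  norm_num
  ring

lemma norm_sq_le_two_mul_norm_add_half_smul_sq (a b : E) :
    ‖a‖ ^ 2 ≤ 2 * ‖a + (2:ℝ)⁻¹ • b‖ ^ 2 + ‖b‖ ^ 2 / 2 := by
  have htri : ‖a‖ ≤ ‖a + (2:ℝ)⁻¹ • b‖ + ‖b‖ / 2 := by
    simpa [norm_smul, div_eq_inv_mul] using norm_sub_le (a + (2:ℝ)⁻¹ • b) ((2:ℝ)⁻¹ • b)
  nlinarith [norm_nonneg a, sq_nonneg (‖a + (2:ℝ)⁻¹ • b‖ - ‖b‖ / 2)]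

variable {g g' : ℝ → E} {a b : ℝ}

lemma integral_inner_eq_half_sub_norm_sq (hab : a ≤ b) (hg : ContinuousOn g (Icc a b))
    (hderiv : ∀ x ∈ Ioo a b, HasDerivAt g (g' x) x) (hg' : ContinuousOn g' (Icc a b)) :
    ∫ x in a..b, inner ℝ (g x) (g' x) = (‖g b‖ ^ 2 - ‖g a‖ ^ 2) / 2 := by
  have hftc := intervalIntegral.integral_eq_sub_of_hasDerivAt_of_le hab (hg.norm.pow 2)
    (fun x hx => (hderiv x hx).norm_sq)
    (((hg.inner hg').intervalIntegrable_of_Icc (μ := volume) hab).const_mul 2)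
  rw [intervalIntegral.integral_const_mul, Pi.pow_apply, Pi.pow_apply] at hftc
  linarith

lemma integral_norm_add_half_smul_sq (hab : a ≤ b) (hg : ContinuousOn g (Icc a b))
    (hderiv : ∀ x ∈ Ioo a b, HasDerivAt g (g' x) x) (hg' : ContinuousOn g' (Icc a b)) :
    ∫ x in a..b, ‖g' x + (2:ℝ)⁻¹ • g x‖ ^ 2 =
      (∫ x in a..b, ‖g' x‖ ^ 2) + (∫ x in a..b, ‖g x‖ ^ 2) / 4 + (‖g b‖ ^ 2 - ‖g a‖ ^ 2) / 2 := by
  have hA : IntervalIntegrable (fun x => ‖g' x‖ ^ 2) volume a b :=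
    (hg'.norm.pow 2).intervalIntegrable_of_Icc hab
  have hB : IntervalIntegrable (fun x => ‖g x‖ ^ 2 / 4) volume a b :=
    ((hg.norm.pow 2).intervalIntegrable_of_Icc hab).div_const 4
  have hD : IntervalIntegrable (fun x => inner ℝ (g x) (g' x)) volume a b :=
    (hg.inner hg').intervalIntegrable_of_Icc hab
  simp_rw [norm_add_half_smul_sq]
  rw [intervalIntegral.integral_add (hA.add hB) hD, intervalIntegral.integral_add hA hB,
    intervalIntegral.integral_div,
    integral_inner_eq_half_sub_norm_sq hab hg hderiv hg']

theorem integrableOn_norm_sq_of_integrableOn_norm_add_half_smul_sq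
    (hg : ∀ x ∈ Ici (0:ℝ), HasDerivWithinAt g (g' x) (Ici 0) x)
    (hg' : ContinuousOn g' (Ici 0))
    (hint : IntegrableOn (fun x => ‖g' x + (2:ℝ)⁻¹ • g x‖ ^ 2) (Ioi 0)) :
    IntegrableOn (fun x => ‖g x‖ ^ 2) (Ioi 0) ∧ IntegrableOn (fun x => ‖g' x‖ ^ 2) (Ioi 0) := by
  have hgc : ContinuousOn g (Ici 0) := fun x hx => (hg x hx).continuousWithinAt
  have hderiv : ∀ x ∈ Ioi (0:ℝ), HasDerivAt g (g' x) x :=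
    fun x hx => (hg x (Ioi_subset_Ici_self hx)).hasDerivAt (Ici_mem_nhds hx)
  have hbound (R : ℝ) (hR : 0 ≤ R) : ∫ x in 0..R, ‖g x‖ ^ 2 ≤
      4 * (∫ x in Ioi 0, ‖g' x + (2:ℝ)⁻¹ • g x‖ ^ 2) + 2 * ‖g 0‖ ^ 2 := by
    have hid := integral_norm_add_half_smul_sq hR (hgc.mono Icc_subset_Ici_self)
      (fun x hx => hderiv x hx.1) (hg'.mono Icc_subset_Ici_self)
    have hA : 0 ≤ ∫ x in 0..R, ‖g' x‖ ^ 2 :=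
      intervalIntegral.integral_nonneg hR fun _ _ => sq_nonneg _
    have hF : ∫ x in 0..R, ‖g' x + (2:ℝ)⁻¹ • g x‖ ^ 2 ≤
        ∫ x in Ioi 0, ‖g' x + (2:ℝ)⁻¹ • g x‖ ^ 2 := by
      rw [intervalIntegral.integral_of_le hR]
      exact setIntegral_mono_set hint (ae_of_all _ fun _ => sq_nonneg _)
        (ae_of_all _ Ioc_subset_Ioi_self)
    linarith [sq_nonneg ‖g R‖]
  have hgsq : IntegrableOn (fun x => ‖g x‖ ^ 2) (Ioi 0) :=
    integrableOn_Ioi_of_nonneg_of_intervalIntegral_le (hgc.norm.pow 2) (fun _ => sq_nonneg _)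
      hbound
  refine ⟨hgsq, ((hint.const_mul 2).add (hgsq.div_const 2)).mono' ?_
    (ae_of_all _ fun x => ?_)⟩
  · exact ((hg'.norm.pow 2).mono Ioi_subset_Ici_self).aestronglyMeasurable measurableSet_Ioi
  · rw [Real.norm_of_nonneg (sq_nonneg _)]
    exact norm_sq_le_two_mul_norm_add_half_smul_sq _ _

end

theorem stmt_12_general (g g' : ℝ → ℂ)
    (hg : ∀ x ∈ Set.Ici (0:ℝ), HasDerivWithinAt g (g' x) (Set.Ici 0) x)
    (hg'c : ContinuousOn g' (Set.Ici 0))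
    (hint : MeasureTheory.IntegrableOn (fun x => ‖g' x + g x / 2‖ ^ 2)
      (Set.Ioi 0)) :
    MeasureTheory.IntegrableOn (fun x => ‖g x‖ ^ 2) (Set.Ioi 0) ∧
    MeasureTheory.IntegrableOn (fun x => ‖g' x‖ ^ 2) (Set.Ioi 0) := by
  have hsmul (z : ℂ) : z / 2 = (2:ℝ)⁻¹ • z := by
    rw [Complex.real_smul, div_eq_inv_mul]; norm_num
  simp_rw [hsmul] at hint
  exact integrableOn_norm_sq_of_integrableOn_norm_add_half_smul_sq hg hg'c hint

/-- A bounded continuously differentiable `g : [0,∞) → ℂ` with `g' + g/2` square-integrable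
belongs to `H¹[0,∞)`: both `g` and `g'` are square-integrable. -/
theorem stmt_12 (g g' : ℝ → ℂ)
    (hg : ∀ x ∈ Set.Ici (0:ℝ), HasDerivWithinAt g (g' x) (Set.Ici 0) x)
    (hg'c : ContinuousOn g' (Set.Ici 0))
    (hbdd : ∃ M : ℝ, ∀ x ∈ Set.Ici (0:ℝ), ‖g x‖ ≤ M)
    (hint : MeasureTheory.IntegrableOn (fun x => ‖g' x + g x / 2‖ ^ 2)
      (Set.Ioi 0)) :
    MeasureTheory.IntegrableOn (fun x => ‖g x‖ ^ 2) (Set.Ioi 0) ∧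
    MeasureTheory.IntegrableOn (fun x => ‖g' x‖ ^ 2) (Set.Ioi 0) :=
  stmt_12_general g g' hg hg'c hint
end

section
/- Let α > 0, N ∈ ℕ, let κ₁, …, κ_N > 0 with κ_n ≠ √α for all n, β ∈ ℝ, C ∈ ℂ with |C| = 1, C₁ ∈ ℝ, and let L : ℝ → ℝ be Borel measurable with ∫_ℝ |L(t)|/(1+t²) dt < ∞. Define a on the upper half-plane ℂ₊ by a(k) = C·∏_{n=1}^N (iκ_n − k)/(iκ_n + k) · exp( −iβk + (1/(πi))·∫_ℝ ( 1/(t−k) − t/(1+t²) )·L(t) dt ), and suppose a(i√α) = 1 and a'(i√α) = 2i√α·C₁. Then (1/√α)·∑_{n=1}^N κ_n/(κ_n² − α) + (1/(2α))·∑_{n=1}^N log|(κ_n − √α)/(κ_n + √α)| + (√α/π)·∫_ℝ L(k)/(k² + α)² dk = C₁. -/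
/-!
Write `a = C · B · exp φ` with `B` the Blaschke product and `φ(k) = -iβk + (πi)⁻¹ H(k)`,
`H` the Herglotz integral of `L`, and put `k₀ = i√α`. Since `a(k₀) = 1`, the hypothesis on
`a'(k₀)` is a statement about the logarithmic derivative `B'/B + φ'` at `k₀`; its imaginary part
gives `2 Σ κₙ/(κₙ² - α) - β - (1/π) Re ∫ L(t)/(t - k₀)² dt = 2√α C₁`, while `log |a(k₀)| = 0` gives
`Σ log |(κₙ - √α)/(κₙ + √α)| + β√α + (1/π) Im H(k₀) = 0`. Eliminating `β` leaves
`Im H(k₀) - √α Re ∫ L(t)/(t - k₀)² dt`, which equals `2α^{3/2} ∫ L(t)/(t² + α)² dt` pointwise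
in `t`. Differentiation under the integral sign is justified by `|L(t)|/(1 + t²) ∈ L¹`.
-/

open MeasureTheory Complex Metric Filter Topology

lemma ofReal_sub_ne_zero_of_im_ne_zero (t : ℝ) {z : ℂ} (hz : z.im ≠ 0) : (t : ℂ) - z ≠ 0 := by
  intro h
  exact hz (by simpa using congrArg Complex.im h)

lemma abs_im_le_norm_ofReal_sub (t : ℝ) (z : ℂ) : |z.im| ≤ ‖(t : ℂ) - z‖ := by
  simpa using abs_im_le_norm ((t : ℂ) - z)

lemma one_add_sq_le_mul_norm_ofReal_sub_sq {k : ℂ} {δ R : ℝ} (hδ : 0 < δ) (hk : δ ≤ |k.im|)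
    (hR : ‖k‖ ≤ R) (t : ℝ) :
    1 + t ^ 2 ≤ (2 + (1 + 2 * R ^ 2) / δ ^ 2) * ‖(t : ℂ) - k‖ ^ 2 := by
  have hδk : δ ≤ ‖(t : ℂ) - k‖ := hk.trans (abs_im_le_norm_ofReal_sub t k)
  have ht : |t| ≤ ‖(t : ℂ) - k‖ + R :=
    calc |t| = ‖(t : ℂ) - k + k‖ := by simp
      _ ≤ ‖(t : ℂ) - k‖ + R := (norm_add_le _ _).trans (by gcongr)
  have hR0 : 0 ≤ R := (norm_nonneg k).trans hR
  have h1 : 1 + 2 * R ^ 2 ≤ (1 + 2 * R ^ 2) / δ ^ 2 * ‖(t : ℂ) - k‖ ^ 2 := by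
    rw [div_mul_eq_mul_div, le_div_iff₀ (by positivity)]
    gcongr
  have ht2 : t ^ 2 ≤ 2 * ‖(t : ℂ) - k‖ ^ 2 + 2 * R ^ 2 := by
    nlinarith [sq_abs t, mul_self_le_mul_self (abs_nonneg t) ht, sq_nonneg (‖(t : ℂ) - k‖ - R)]
  nlinarith

lemma norm_ofReal_div_ofReal_sub_sq_le {k : ℂ} {δ R : ℝ} (hδ : 0 < δ) (hk : δ ≤ |k.im|)
    (hR : ‖k‖ ≤ R) (x t : ℝ) :
    ‖(x : ℂ) / ((t : ℂ) - k) ^ 2‖ ≤ (2 + (1 + 2 * R ^ 2) / δ ^ 2) * (|x| / (1 + t ^ 2)) := by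
  have hpos : 0 < ‖(t : ℂ) - k‖ := hδ.trans_le (hk.trans (abs_im_le_norm_ofReal_sub t k))
  rw [norm_div, norm_pow, norm_real, Real.norm_eq_abs, ← mul_div_assoc,
    div_le_div_iff₀ (by positivity) (by positivity)]
  calc |x| * (1 + t ^ 2)
      ≤ |x| * ((2 + (1 + 2 * R ^ 2) / δ ^ 2) * ‖(t : ℂ) - k‖ ^ 2) := by
        gcongr
        exact one_add_sq_le_mul_norm_ofReal_sub_sq hδ hk hR t
    _ = _ := by ring

lemma herglotzKernel_eq (t : ℝ) {z : ℂ} (hz : z.im ≠ 0) :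
    1 / ((t : ℂ) - z) - (t : ℂ) / (1 + (t : ℂ) ^ 2)
      = ((1 + z ^ 2) / ((t : ℂ) - z) + z) / (1 + (t : ℂ) ^ 2) := by
  have h1 := ofReal_sub_ne_zero_of_im_ne_zero t hz
  have h2 : (1 + (t : ℂ) ^ 2) ≠ 0 := by exact_mod_cast (by positivity : (1 + t ^ 2 : ℝ) ≠ 0)
  field_simp
  ring

lemma norm_herglotzKernel_le (t : ℝ) {z : ℂ} (hz : z.im ≠ 0) :
    ‖1 / ((t : ℂ) - z) - (t : ℂ) / (1 + (t : ℂ) ^ 2)‖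
      ≤ (‖1 + z ^ 2‖ / |z.im| + ‖z‖) / (1 + t ^ 2) := by
  have h : ‖1 + (t : ℂ) ^ 2‖ = 1 + t ^ 2 := by
    rw [← ofReal_one, ← ofReal_pow, ← ofReal_add, norm_real, Real.norm_eq_abs,
      abs_of_pos (by positivity)]
  rw [herglotzKernel_eq t hz, norm_div, h]
  gcongr
  refine (norm_add_le _ _).trans ?_
  rw [norm_div]
  gcongr
  exact abs_im_le_norm_ofReal_sub t z

noncomputable def herglotzIntegral (L : ℝ → ℝ) (k : ℂ) : ℂ :=
  ∫ t : ℝ, (1 / ((t : ℂ) - k) - (t : ℂ) / (1 + (t : ℂ) ^ 2)) * (L t : ℂ)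

section HerglotzIntegral

variable {L : ℝ → ℝ}

lemma integrable_herglotzKernel_mul (hLm : Measurable L)
    (hLint : Integrable fun t : ℝ => |L t| / (1 + t ^ 2)) {z : ℂ} (hz : z.im ≠ 0) :
    Integrable fun t : ℝ => (1 / ((t : ℂ) - z) - (t : ℂ) / (1 + (t : ℂ) ^ 2)) * (L t : ℂ) := by
  refine (hLint.const_mul (‖1 + z ^ 2‖ / |z.im| + ‖z‖)).mono'
    (Measurable.aestronglyMeasurable (by fun_prop)) (.of_forall fun t => ?_)
  calc _ = ‖1 / ((t : ℂ) - z) - (t : ℂ) / (1 + (t : ℂ) ^ 2)‖ * |L t| := by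
        rw [norm_mul, norm_real, Real.norm_eq_abs]
    _ ≤ (‖1 + z ^ 2‖ / |z.im| + ‖z‖) / (1 + t ^ 2) * |L t| := by
        gcongr
        exact norm_herglotzKernel_le t hz
    _ = _ := by ring

lemma integrable_ofReal_div_ofReal_sub_sq (hLm : Measurable L)
    (hLint : Integrable fun t : ℝ => |L t| / (1 + t ^ 2)) {z : ℂ} (hz : z.im ≠ 0) :
    Integrable fun t : ℝ => (L t : ℂ) / ((t : ℂ) - z) ^ 2 :=
  (hLint.const_mul _).mono' (Measurable.aestronglyMeasurable (by fun_prop)) (.of_forall fun t =>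
    norm_ofReal_div_ofReal_sub_sq_le (abs_pos.mpr hz) le_rfl le_rfl (L t) t)

lemma hasDerivAt_herglotzIntegral (hLm : Measurable L)
    (hLint : Integrable fun t : ℝ => |L t| / (1 + t ^ 2)) {z : ℂ} (hz : z.im ≠ 0) :
    HasDerivAt (herglotzIntegral L) (∫ t : ℝ, (L t : ℂ) / ((t : ℂ) - z) ^ 2) z := by
  set δ := |z.im| / 2 with hδdef
  have hδ : 0 < δ := by positivity
  have hball : ∀ k ∈ ball z δ, δ ≤ |k.im| ∧ ‖k‖ ≤ ‖z‖ + δ := by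
    intro k hk
    rw [mem_ball, dist_eq] at hk
    refine ⟨?_, ?_⟩
    · have h₁ := abs_im_le_norm (k - z)
      have h₂ := abs_sub_abs_le_abs_sub z.im k.im
      rw [sub_im] at h₁
      rw [abs_sub_comm] at h₂
      linarith
    · linarith [norm_le_norm_add_norm_sub' k z]
  refine (hasDerivAt_integral_of_dominated_loc_of_deriv_le (ball_mem_nhds z hδ)
    (.of_forall fun k => Measurable.aestronglyMeasurable (by fun_prop))
    (integrable_herglotzKernel_mul hLm hLint hz) (Measurable.aestronglyMeasurable (by fun_prop))
    (.of_forall fun t k hk =>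
      norm_ofReal_div_ofReal_sub_sq_le hδ (hball k hk).1 (hball k hk).2 (L t) t)
    (hLint.const_mul _) (.of_forall fun t k hk => ?_)).2
  have hk : (t : ℂ) - k ≠ 0 :=
    ofReal_sub_ne_zero_of_im_ne_zero t (abs_pos.mp (hδ.trans_le (hball k hk).1))
  have hsub : HasDerivAt (fun k : ℂ => (t : ℂ) - k) (-1) k := by
    simpa using (hasDerivAt_id k).const_sub (t : ℂ)
  have h := ((hsub.inv hk).sub_const ((t : ℂ) / (1 + (t : ℂ) ^ 2))).mul_const (L t : ℂ)
  rw [show -(-1) / ((t : ℂ) - k) ^ 2 * (L t : ℂ) = (L t : ℂ) / ((t : ℂ) - k) ^ 2 by ring] at h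
  simpa only [one_div, Pi.inv_apply] using h

lemma im_herglotzKernel_mul_sub_re (x t s : ℝ) (hs : s ≠ 0) :
    ((1 / ((t : ℂ) - I * s) - (t : ℂ) / (1 + (t : ℂ) ^ 2)) * (x : ℂ)).im
      - s * ((x : ℂ) / ((t : ℂ) - I * s) ^ 2).re = 2 * s ^ 3 * (x / (t ^ 2 + s ^ 2) ^ 2) := by
  have h : t ^ 2 + s ^ 2 ≠ 0 := by positivity
  simp only [one_div, pow_two, mul_im, sub_re, inv_re, ofReal_re, mul_re, I_re, zero_mul, I_im,
    ofReal_im, mul_zero, sub_self, sub_zero, normSq, MonoidWithZeroHom.coe_mk, ZeroHom.coe_mk,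
    sub_im, one_mul, zero_add, zero_sub, mul_neg, neg_mul, neg_neg, div_re, add_re, one_re,
    add_im, one_im, add_zero, zero_div, inv_im, div_im]
  rw [show (t * t - s * s) * (t * t - s * s) + (-(t * s) + -(s * t)) * (-(t * s) + -(s * t))
    = (t * t + s * s) * (t * t + s * s) by ring]
  field_simp
  ring

lemma im_herglotzIntegral_sub_re_integral (hLm : Measurable L)
    (hLint : Integrable fun t : ℝ => |L t| / (1 + t ^ 2)) {s : ℝ} (hs : s ≠ 0) :
    (herglotzIntegral L (I * s)).im - s * (∫ t : ℝ, (L t : ℂ) / ((t : ℂ) - I * s) ^ 2).re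
      = 2 * s ^ 3 * ∫ t : ℝ, L t / (t ^ 2 + s ^ 2) ^ 2 := by
  have hz : (I * s).im ≠ 0 := by simpa using hs
  have h₁ := integrable_herglotzKernel_mul hLm hLint hz
  have h₂ := integrable_ofReal_div_ofReal_sub_sq hLm hLint hz
  rw [herglotzIntegral, ← RCLike.im_to_complex, ← RCLike.re_to_complex, ← integral_im h₁,
    ← integral_re h₂, ← integral_const_mul, ← integral_sub h₁.im (h₂.re.const_mul s),
    ← integral_const_mul]
  exact integral_congr_ae (.of_forall fun t => im_herglotzKernel_mul_sub_re (L t) t s hs)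

end HerglotzIntegral

noncomputable def nevanlinnaExponent (β : ℝ) (L : ℝ → ℝ) (k : ℂ) : ℂ :=
  -I * β * k + (1 / (Real.pi * I)) * herglotzIntegral L k

lemma re_nevanlinnaExponent_I_mul (β : ℝ) (L : ℝ → ℝ) (s : ℝ) :
    (nevanlinnaExponent β L (I * s)).re = β * s + (herglotzIntegral L (I * s)).im / Real.pi := by
  simp [nevanlinnaExponent, div_eq_mul_inv]
  ring

lemma hasDerivAt_nevanlinnaExponent (β : ℝ) {L : ℝ → ℝ} (hLm : Measurable L)
    (hLint : Integrable fun t : ℝ => |L t| / (1 + t ^ 2)) {z : ℂ} (hz : z.im ≠ 0) :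
    HasDerivAt (nevanlinnaExponent β L)
      (-I * β + (1 / (Real.pi * I)) * ∫ t : ℝ, (L t : ℂ) / ((t : ℂ) - z) ^ 2) z := by
  have h := ((hasDerivAt_id' z).const_mul (-I * β)).add
    ((hasDerivAt_herglotzIntegral hLm hLint hz).const_mul (1 / (Real.pi * I)))
  rwa [mul_one] at h

lemma im_deriv_nevanlinnaExponent (β : ℝ) {L : ℝ → ℝ} (hLm : Measurable L)
    (hLint : Integrable fun t : ℝ => |L t| / (1 + t ^ 2)) {z : ℂ} (hz : z.im ≠ 0) :
    (deriv (nevanlinnaExponent β L) z).im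
      = -β - (∫ t : ℝ, (L t : ℂ) / ((t : ℂ) - z) ^ 2).re / Real.pi := by
  rw [(hasDerivAt_nevanlinnaExponent β hLm hLint hz).deriv]
  simp [div_eq_mul_inv]
  ring

lemma I_mul_sub_I_mul_ne_zero {x y : ℝ} (h : x ≠ y) : I * x - I * y ≠ 0 := by
  rw [← mul_sub, ← ofReal_sub]
  exact mul_ne_zero I_ne_zero (ofReal_ne_zero.mpr (sub_ne_zero.mpr h))

lemma I_mul_add_I_mul_ne_zero {x y : ℝ} (h : x ≠ -y) : I * x + I * y ≠ 0 := by
  rw [← mul_add, ← ofReal_add]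
  exact mul_ne_zero I_ne_zero (ofReal_ne_zero.mpr fun h' => h (eq_neg_of_add_eq_zero_left h'))

lemma logDeriv_sub_div_add (w : ℂ) {k : ℂ} (h₁ : w - k ≠ 0) (h₂ : w + k ≠ 0) :
    logDeriv (fun k => (w - k) / (w + k)) k = 2 * w / (k ^ 2 - w ^ 2) := by
  rw [logDeriv_div k h₁ h₂ (by fun_prop) (by fun_prop)]
  simp [logDeriv_apply]
  have : k ^ 2 - w ^ 2 ≠ 0 := by
    rw [show k ^ 2 - w ^ 2 = -((w - k) * (w + k)) by ring]
    exact neg_ne_zero.mpr (mul_ne_zero h₁ h₂)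
  field_simp
  ring

lemma logDeriv_prod_sub_div_add {ι : Type*} (u : Finset ι) (w : ι → ℂ) {k : ℂ}
    (h₁ : ∀ n ∈ u, w n - k ≠ 0) (h₂ : ∀ n ∈ u, w n + k ≠ 0) :
    logDeriv (fun k => ∏ n ∈ u, (w n - k) / (w n + k)) k
      = ∑ n ∈ u, 2 * w n / (k ^ 2 - w n ^ 2) := by
  rw [logDeriv_prod (f := fun n k => (w n - k) / (w n + k))
    (fun n hn => div_ne_zero (h₁ n hn) (h₂ n hn))
    (fun n hn => by have := h₂ n hn; fun_prop (disch := assumption))]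
  exact Finset.sum_congr rfl fun n hn => logDeriv_sub_div_add (w n) (h₁ n hn) (h₂ n hn)

lemma two_mul_I_mul_div_I_mul_sq_sub_sq (κ s : ℝ) :
    2 * (I * κ) / ((I * s) ^ 2 - (I * κ) ^ 2) = ((2 * (κ / (κ ^ 2 - s ^ 2)) : ℝ) : ℂ) * I := by
  rw [show (I * s) ^ 2 - (I * κ) ^ 2 = ((κ ^ 2 - s ^ 2 : ℝ) : ℂ) by
    push_cast; linear_combination (s ^ 2 - κ ^ 2 : ℂ) * I_sq]
  push_cast
  ring

lemma prod_I_mul_sub_div_add {ι : Type*} (u : Finset ι) (κ : ι → ℝ) (s : ℝ) :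
    ∏ n ∈ u, (I * κ n - I * s) / (I * κ n + I * s)
      = ((∏ n ∈ u, (κ n - s) / (κ n + s) : ℝ) : ℂ) := by
  push_cast
  refine Finset.prod_congr rfl fun n _ => ?_
  rw [← mul_sub, ← mul_add, mul_div_mul_left _ _ I_ne_zero]

lemma logDeriv_const_mul_mul_cexp {f g : ℂ → ℂ} {k C : ℂ} (hC : C ≠ 0) (hf : f k ≠ 0)
    (hfd : DifferentiableAt ℂ f k) (hgd : DifferentiableAt ℂ g k) :
    logDeriv (fun k => C * f k * exp (g k)) k = logDeriv f k + deriv g k := by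
  simp_rw [mul_assoc]
  rw [logDeriv_const_mul k C hC,
    logDeriv_mul (g := fun k => exp (g k)) k hf (exp_ne_zero _) hfd hgd.cexp,
    show (fun k => exp (g k)) = exp ∘ g from rfl, logDeriv_comp differentiableAt_exp hgd,
    Complex.logDeriv_exp, Pi.one_apply, one_mul]

noncomputable def nevanlinnaFactorization {ι : Type*} [Fintype ι] (C : ℂ) (κ : ι → ℝ) (β : ℝ)
    (L : ℝ → ℝ) (k : ℂ) : ℂ :=
  C * (∏ n, (I * κ n - k) / (I * κ n + k)) * exp (nevanlinnaExponent β L k)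

section NevanlinnaFactorization

variable {ι : Type*} [Fintype ι] {C : ℂ} {κ : ι → ℝ} {s : ℝ}

lemma log_norm_nevanlinnaFactorization_I_mul (β : ℝ) (L : ℝ → ℝ) (hC : ‖C‖ = 1)
    (hκs : ∀ n, κ n ≠ s) (hκs_pos : ∀ n, 0 < κ n + s) :
    Real.log ‖nevanlinnaFactorization C κ β L (I * s)‖
      = ∑ n, Real.log (|κ n - s| / (κ n + s))
        + (β * s + (herglotzIntegral L (I * s)).im / Real.pi) := by
  have hr : ∀ n, (κ n - s) / (κ n + s) ≠ 0 := fun n =>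
    div_ne_zero (sub_ne_zero.mpr (hκs n)) (hκs_pos n).ne'
  rw [nevanlinnaFactorization, prod_I_mul_sub_div_add, norm_mul, norm_mul, hC, one_mul,
    norm_real, norm_exp, Real.norm_eq_abs, Finset.abs_prod,
    Real.log_mul (Finset.prod_ne_zero_iff.mpr fun n _ => abs_ne_zero.mpr (hr n))
      (Real.exp_ne_zero _),
    Real.log_exp, re_nevanlinnaExponent_I_mul, Real.log_prod fun n _ => abs_ne_zero.mpr (hr n)]
  simp only [abs_div, abs_of_pos (hκs_pos _)]

lemma im_logDeriv_nevanlinnaFactorization_I_mul (β : ℝ) {L : ℝ → ℝ} (hLm : Measurable L)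
    (hLint : Integrable fun t : ℝ => |L t| / (1 + t ^ 2)) (hC : C ≠ 0) (hs : s ≠ 0)
    (hκs : ∀ n, κ n ≠ s) (hκs_neg : ∀ n, κ n ≠ -s) :
    (logDeriv (nevanlinnaFactorization C κ β L) (I * s)).im
      = 2 * ∑ n, κ n / (κ n ^ 2 - s ^ 2) - β
        - (∫ t : ℝ, (L t : ℂ) / ((t : ℂ) - I * s) ^ 2).re / Real.pi := by
  have hz : (I * s).im ≠ 0 := by simpa using hs
  have hsub : ∀ n ∈ Finset.univ, I * κ n - I * s ≠ 0 := fun n _ => I_mul_sub_I_mul_ne_zero (hκs n)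
  have hadd : ∀ n ∈ Finset.univ, I * κ n + I * s ≠ 0 :=
    fun n _ => I_mul_add_I_mul_ne_zero (hκs_neg n)
  have hBd : DifferentiableAt ℂ (fun k => ∏ n, (I * κ n - k) / (I * κ n + k)) (I * s) :=
    .fun_finsetProd fun n hn => by
      have := hadd n hn
      fun_prop (disch := assumption)
  unfold nevanlinnaFactorization
  rw [logDeriv_const_mul_mul_cexp hC
    (Finset.prod_ne_zero_iff.mpr fun n hn => div_ne_zero (hsub n hn) (hadd n hn)) hBd
    (hasDerivAt_nevanlinnaExponent β hLm hLint hz).differentiableAt, add_im,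
    im_deriv_nevanlinnaExponent β hLm hLint hz, logDeriv_prod_sub_div_add _ _ hsub hadd,
    im_sum, Finset.mul_sum]
  simp only [two_mul_I_mul_div_I_mul_sq_sub_sq, mul_I_im, ofReal_re]
  ring

end NevanlinnaFactorization

/-- First trace formula for strings in the class `F_α`: if `a` has the Nevanlinna
factorization on the upper half-plane with boundary data `L` and zeros `iκ_n` (`κ_n ≠ √α`),
and satisfies `a(i√α) = 1` and `a'(i√α) = 2i√α·C₁`, then
`(1/√α)Σ κ_n/(κ_n²−α) + (1/(2α))Σ log|(κ_n−√α)/(κ_n+√α)| + (√α/π)∫ L(k)/(k²+α)² dk = C₁`. -/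
theorem stmt_17 (α : ℝ) (hα : 0 < α) (N : ℕ) (κ : Fin N → ℝ)
    (hκ : ∀ n, 0 < κ n) (hκα : ∀ n, κ n ≠ Real.sqrt α)
    (β : ℝ) (C : ℂ) (hC : ‖C‖ = 1) (C₁ : ℝ)
    (L : ℝ → ℝ) (hLmeas : Measurable L)
    (hLint : MeasureTheory.Integrable fun t : ℝ => |L t| / (1 + t ^ 2))
    (a : ℂ → ℂ)
    (ha : ∀ k : ℂ, 0 < k.im →
      a k = C * (∏ n, (Complex.I * (κ n : ℂ) - k) / (Complex.I * (κ n : ℂ) + k)) *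
        Complex.exp (-Complex.I * (β : ℂ) * k
          + (1 / ((Real.pi : ℂ) * Complex.I)) *
            ∫ t : ℝ, (1 / ((t : ℂ) - k) - (t : ℂ) / (1 + (t : ℂ) ^ 2)) * (L t : ℂ)))
    (ha0 : a (Complex.I * (Real.sqrt α : ℂ)) = 1)
    (ha1 : deriv a (Complex.I * (Real.sqrt α : ℂ))
      = 2 * Complex.I * (Real.sqrt α : ℂ) * (C₁ : ℂ)) :
    (1 / Real.sqrt α) * (∑ n, κ n / (κ n ^ 2 - α))
      + (1 / (2 * α)) * (∑ n, Real.log (|κ n - Real.sqrt α| / (κ n + Real.sqrt α)))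
      + (Real.sqrt α / Real.pi) * (∫ k : ℝ, L k / (k ^ 2 + α) ^ 2) = C₁ := by
  set s := Real.sqrt α
  have hs : 0 < s := Real.sqrt_pos.mpr hα
  have hsα : s ^ 2 = α := Real.sq_sqrt hα.le
  have hκs_pos : ∀ n, 0 < κ n + s := fun n => by linarith [hκ n]
  have ha_eq : a =ᶠ[𝓝 (I * s)] nevanlinnaFactorization C κ β L := by
    filter_upwards [(isOpen_lt continuous_const continuous_im).mem_nhds
      (show 0 < (I * s : ℂ).im by simpa)] with k hk using ha k hk
  have hmod := log_norm_nevanlinnaFactorization_I_mul β L hC hκα hκs_pos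
  rw [← ha_eq.eq_of_nhds, ha0, norm_one, Real.log_one] at hmod
  have him := im_logDeriv_nevanlinnaFactorization_I_mul β hLmeas hLint
    (ne_zero_of_norm_ne_zero (by rw [hC]; exact one_ne_zero)) hs.ne' hκα
    fun n h => by linarith [hκs_pos n]
  rw [← (logDeriv_congr_nhds ha_eq).eq_of_nhds, logDeriv_apply, ha0, div_one, ha1] at him
  have hsplit := im_herglotzIntegral_sub_re_integral hLmeas hLint hs.ne'
  rw [show (2 * I * s * C₁ : ℂ).im = 2 * s * C₁ by simp] at him
  have hπ : Real.pi ≠ 0 := Real.pi_ne_zero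
  field_simp at hmod him
  rw [← hsα]
  field_simp
  linear_combination -hmod - s * him - hsplit
end
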